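/- arXiv:1706.06941 — 3 statements merged into one kernel-verified Lean document; each statement's English description precedes it below -/
import Mathlib

section
/- Let (X,d) be a metric space equipped with its Borel σ-algebra, let r_1,…,r_M ∈ X be prototypes with dissimilarity embedding ζ(g) = (d(g,r_1),…,d(g,r_M)) ∈ ℝ^M, and let d' be a metric on ℝ^M for which there is a constant m' > 0 with d'(a,b) ≤ m'·‖a−b‖₂ for all a,b ∈ ℝ^M. Assume there are constants c, C > 0 with c·d'(ζ(g),ζ(f)) ≤ d(g,f) ≤ C·d'(ζ(g),ζ(f)) for all g,f ∈ X. Let g_1,…,g_n (with n ≥ 2) be i.i.d. X-valued random elements on a probability space (Ω,P) with common law Q, such that E[d(g_1,z)²] < ∞ for every z ∈ X. Let m ∈ X be a Fréchet population mean of Q with Fréchet variation V_Q := E[d(g_1,m)²], and let μ̂ : Ω → X be a measurable Fréchet sample mean of g_1,…,g_n. Put ȳ := (1/n)·Σ_{t=1}^n ζ(g_t), e := E[ζ(g_1)], Var_F := E[‖ζ(g_1) − e‖₂²], v₂ := M·V_Q − Var_F/2, and define Ψ(γ) := P(d(μ̂,m) ≤ γ) and Υ(γ) := P(d'(e,ȳ)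 ≤ γ) for γ ∈ ℝ (so Υ(s) = 0 for s < 0). Then for every δ > 0, setting b_δ := m'·√(2·(v₂ + δ)), one has for all γ ≥ 0: Υ(γ/C − b_δ) − v₂/δ ≤ Ψ(γ) ≤ Υ(γ/c + b_δ) + v₂/δ. -/
/-!
Write `W = ‖ζ(μ̂) - ȳ‖²`. Expanding squares around `ȳ`, the sample-mean property of `μ̂` and the
`√M`-Lipschitz bound on `ζ` give `n W + ∑ ‖ζ(g_t) - e‖² ≤ M ∑ d(g_t, m)² + n ‖ȳ - e‖²`; since the
cross terms of independent centred vectors integrate to zero, `E ‖ȳ - e‖² = Var_F / n`, hence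
`E W ≤ M V_Q - (1 - 1/n) Var_F ≤ v₂`. By Markov, `W < Var_F / 2 + δ` off an event of probability at
most `v₂ / δ`; there, as `‖ζ(m) - e‖² + Var_F / 2 ≤ v₂` (bias–variance),
`d'(ζ(μ̂), ȳ) + d'(ζ(m), e) ≤ b_δ`, so `d'(ζ(μ̂), ζ(m))` and `d'(e, ȳ)` differ by at most `b_δ`, and
the bi-Lipschitz bounds convert this into the two inclusions of events.
-/

open MeasureTheory ProbabilityTheory

/-- The dissimilarity embedding `ζ(g) = (d(g,r_1),…,d(g,r_M)) ∈ ℝ^M`. -/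
noncomputable def dissEmbed {X : Type*} [MetricSpace X] {M : ℕ} (r : Fin M → X) (g : X) :
    EuclideanSpace ℝ (Fin M) :=
  (WithLp.equiv 2 (Fin M → ℝ)).symm fun i => dist g (r i)

open Finset

namespace ProbabilityTheory.HasLaw

variable {Ω 𝓧 ε : Type*} [MeasurableSpace Ω] [MeasurableSpace 𝓧] [TopologicalSpace ε]
  [ContinuousENorm ε] {P : Measure Ω} {μ : Measure 𝓧} {X : Ω → 𝓧} {f : 𝓧 → ε}

lemma integrable_comp (hX : HasLaw X μ P) (hf : Integrable f μ) :
    Integrable (fun ω => f (X ω)) P :=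
  (hX.map_eq ▸ hf).comp_aemeasurable hX.aemeasurable

lemma memLp_comp (hX : HasLaw X μ P) {p : ENNReal} (hf : MemLp f p μ) :
    MemLp (fun ω => f (X ω)) p P :=
  (hX.map_eq ▸ hf).comp_of_map hX.aemeasurable

end ProbabilityTheory.HasLaw

section InnerProductSpace

variable {E : Type*} [NormedAddCommGroup E] [InnerProductSpace ℝ E]

lemma sum_norm_sub_sq_eq_add {ι : Type*} [Fintype ι] (a : ι → E) {y : E}
    (hy : (Fintype.card ι : ℝ) • y = ∑ t, a t) (z : E) :
    ∑ t, ‖a t - z‖ ^ 2 = ∑ t, ‖a t - y‖ ^ 2 + Fintype.card ι * ‖z - y‖ ^ 2 := by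
  have expand (w : E) : ∑ t, ‖a t - w‖ ^ 2
      = ∑ t, ‖a t‖ ^ 2 - 2 * inner ℝ ((Fintype.card ι : ℝ) • y) w
        + Fintype.card ι * ‖w‖ ^ 2 := by
    simp only [norm_sub_sq_real, sum_add_distrib, sum_sub_distrib, ← mul_sum, ← sum_inner, hy,
      sum_const, card_univ, nsmul_eq_mul]
  rw [expand z, expand y, norm_sub_sq_real z y, real_inner_smul_left, real_inner_smul_left,
    real_inner_self_eq_norm_sq, real_inner_comm z y]
  ring

variable [CompleteSpace E] {α : Type*} [MeasurableSpace α] {μ : Measure α} [IsProbabilityMeasure μ]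

lemma integral_norm_sub_sq_eq_add {f : α → E} (hf : MemLp f 2 μ) (z : E) :
    ∫ x, ‖f x - z‖ ^ 2 ∂μ = ∫ x, ‖f x - μ[f]‖ ^ 2 ∂μ + ‖μ[f] - z‖ ^ 2 := by
  have hc : MemLp (fun x => f x - μ[f]) 2 μ := hf.sub (memLp_const _)
  have hsplit (x : α) : ‖f x - z‖ ^ 2
      = ‖f x - μ[f]‖ ^ 2 + (2 * inner ℝ (μ[f] - z) (f x - μ[f]) + ‖μ[f] - z‖ ^ 2) := by
    rw [show f x - z = (f x - μ[f]) + (μ[f] - z) by abel, norm_add_sq_real, real_inner_comm]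
    ring
  have hcross : ∫ x, inner ℝ (μ[f] - z) (f x - μ[f]) ∂μ = 0 := by
    rw [integral_inner (hc.integrable one_le_two), integral_sub (hf.integrable one_le_two)
      (integrable_const _), integral_const, probReal_univ, one_smul, sub_self, inner_zero_right]
  have hinner : Integrable (fun x => 2 * inner ℝ (μ[f] - z) (f x - μ[f])) μ :=
    ((hc.integrable one_le_two).const_inner _).const_mul 2
  have hrest : Integrable
      (fun x => 2 * inner ℝ (μ[f] - z) (f x - μ[f]) + ‖μ[f] - z‖ ^ 2) μ :=
    hinner.add (integrable_const _)
  simp_rw [hsplit]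
  rw [integral_add hc.norm.integrable_sq hrest, integral_add hinner (integrable_const _),
    integral_const_mul, hcross, integral_const, probReal_univ, one_smul, mul_zero, zero_add]

variable [MeasurableSpace E] [BorelSpace E] {Ω : Type*} [MeasurableSpace Ω] {P : Measure Ω}

lemma integral_norm_sum_sq_of_iIndepFun [IsFiniteMeasure P] {ι : Type*} [Fintype ι] {Z : ι → Ω → E}
    (hind : iIndepFun Z P) (hZ : ∀ t, MemLp (Z t) 2 P) (hmean : ∀ t, P[Z t] = 0) :
    ∫ ω, ‖∑ t, Z t ω‖ ^ 2 ∂P = ∑ t, ∫ ω, ‖Z t ω‖ ^ 2 ∂P := by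
  classical
  have hsq (s : ι) : Integrable (fun ω => inner ℝ (Z s ω) (Z s ω)) P := by
    simp_rw [real_inner_self_eq_norm_sq]
    exact (hZ s).norm.integrable_sq
  have hcross {s t : ι} (hst : s ≠ t) :
      Integrable (fun ω => inner ℝ (Z s ω) (Z t ω)) P ∧
        ∫ ω, inner ℝ (Z s ω) (Z t ω) ∂P = 0 := by
    have h := hind.indepFun hst
    have hs := (hZ s).integrable one_le_two
    have ht := (hZ t).integrable one_le_two
    refine ⟨h.integrable_bilin hs ht (innerSL ℝ : E →L[ℝ] E →L[ℝ] ℝ), ?_⟩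
    exact (h.integral_bilin hs ht (innerSL ℝ : E →L[ℝ] E →L[ℝ] ℝ)).trans (by simp [hmean])
  have hinner (s t : ι) : Integrable (fun ω => inner ℝ (Z s ω) (Z t ω)) P := by
    rcases eq_or_ne s t with rfl | hst
    · exact hsq s
    · exact (hcross hst).1
  simp_rw [← real_inner_self_eq_norm_sq, sum_inner, inner_sum]
  rw [integral_finsetSum _ fun s _ => integrable_finsetSum _ fun t _ => hinner s t]
  refine sum_congr rfl fun s _ => ?_
  rw [integral_finsetSum _ fun t _ => hinner s t, sum_eq_single s
    (fun t _ hts => (hcross (Ne.symm hts)).2) (fun h => (h (mem_univ s)).elim)]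

lemma integral_norm_inv_smul_sum_sub_sq [IsProbabilityMeasure P] {X : Type*} [MeasurableSpace X]
    {Q : Measure X} [IsProbabilityMeasure Q] {n : ℕ} (hn : n ≠ 0) {g : Fin n → Ω → X}
    (hlaw : ∀ t, HasLaw (g t) Q P) (hind : iIndepFun g P) {φ : X → E} (hφm : Measurable φ)
    (hφ : MemLp φ 2 Q) :
    ∫ ω, ‖(n : ℝ)⁻¹ • ∑ t, φ (g t ω) - Q[φ]‖ ^ 2 ∂P = (∫ x, ‖φ x - Q[φ]‖ ^ 2 ∂Q) / n := by
  set e := Q[φ] with he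
  have hn' : (n : ℝ) ≠ 0 := Nat.cast_ne_zero.2 hn
  have hc : MemLp (fun x => φ x - e) 2 Q := hφ.sub (memLp_const _)
  have hZ (t : Fin n) : MemLp (fun ω => φ (g t ω) - e) 2 P := (hlaw t).memLp_comp hc
  have hZmean (t : Fin n) : ∫ ω, φ (g t ω) - e ∂P = 0 := by
    refine ((hlaw t).integral_comp (f := fun x => φ x - e) hc.1).trans ?_
    rw [integral_sub (hφ.integrable one_le_two) (integrable_const _), integral_const,
      probReal_univ, one_smul, he, sub_self]
  have hZsq (t : Fin n) : ∫ ω, ‖φ (g t ω) - e‖ ^ 2 ∂P = ∫ x, ‖φ x - e‖ ^ 2 ∂Q :=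
    (hlaw t).integral_comp (f := fun x => ‖φ x - e‖ ^ 2) (hc.1.norm.pow 2)
  have hcenter (ω : Ω) :
      (n : ℝ)⁻¹ • ∑ t, φ (g t ω) - e = (n : ℝ)⁻¹ • ∑ t, (φ (g t ω) - e) := by
    rw [sum_sub_distrib, smul_sub, sum_const, card_univ, Fintype.card_fin,
      ← Nat.cast_smul_eq_nsmul ℝ, smul_smul, inv_mul_cancel₀ hn', one_smul]
  simp_rw [hcenter, norm_smul, mul_pow]
  have hindZ : iIndepFun (fun t ω => φ (g t ω) - e) P :=
    hind.comp (fun _ x => φ x - e) fun _ => hφm.sub_const _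
  rw [integral_const_mul, integral_norm_sum_sq_of_iIndepFun hindZ hZ hZmean]
  simp only [hZsq, sum_const, card_univ, Fintype.card_fin, nsmul_eq_mul, norm_inv,
    Real.norm_natCast]
  field_simp

end InnerProductSpace

section DissimilarityEmbedding

variable {X : Type*} [MetricSpace X] {M : ℕ} (r : Fin M → X)

lemma continuous_dissEmbed : Continuous (dissEmbed r) :=
  (PiLp.continuous_toLp 2 _).comp (continuous_pi fun _ => continuous_id.dist continuous_const)

lemma norm_dissEmbed_sub_sq_le (x y : X) :
    ‖dissEmbed r x - dissEmbed r y‖ ^ 2 ≤ M * dist x y ^ 2 := by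
  rw [EuclideanSpace.norm_eq, Real.sq_sqrt (by positivity)]
  calc ∑ i, ‖(dissEmbed r x - dissEmbed r y) i‖ ^ 2
      = ∑ i, |dist x (r i) - dist y (r i)| ^ 2 := rfl
    _ ≤ ∑ _i : Fin M, dist x y ^ 2 :=
      sum_le_sum fun i _ => pow_le_pow_left₀ (abs_nonneg _) (abs_dist_sub_le x y (r i)) 2
    _ = M * dist x y ^ 2 := by simp

lemma norm_dissEmbed_sub_le (x y : X) :
    ‖dissEmbed r x - dissEmbed r y‖ ≤ √M * dist x y := by
  rw [← Real.sqrt_sq dist_nonneg, ← Real.sqrt_mul (Nat.cast_nonneg M)]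
  exact Real.le_sqrt_of_sq_le (norm_dissEmbed_sub_sq_le r x y)

lemma mul_norm_dissEmbed_sub_inv_smul_sum_sq_add_le {n : ℕ} (hn : n ≠ 0) (x : Fin n → X)
    {μ z : X} (hμ : ∑ t, dist (x t) μ ^ 2 ≤ ∑ t, dist (x t) z ^ 2) (e : EuclideanSpace ℝ (Fin M)) :
    n * ‖dissEmbed r μ - (n : ℝ)⁻¹ • ∑ t, dissEmbed r (x t)‖ ^ 2
        + ∑ t, ‖dissEmbed r (x t) - e‖ ^ 2
      ≤ M * ∑ t, dist (x t) z ^ 2 + n * ‖(n : ℝ)⁻¹ • ∑ t, dissEmbed r (x t) - e‖ ^ 2 := by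
  have hy : (Fintype.card (Fin n) : ℝ) • ((n : ℝ)⁻¹ • ∑ t, dissEmbed r (x t))
      = ∑ t, dissEmbed r (x t) := by
    rw [Fintype.card_fin, smul_smul, mul_inv_cancel₀ (Nat.cast_ne_zero.2 hn), one_smul]
  have hμ' : ∑ t, ‖dissEmbed r (x t) - dissEmbed r μ‖ ^ 2 ≤ M * ∑ t, dist (x t) z ^ 2 :=
    calc ∑ t, ‖dissEmbed r (x t) - dissEmbed r μ‖ ^ 2
        ≤ ∑ t, M * dist (x t) μ ^ 2 := sum_le_sum fun t _ => norm_dissEmbed_sub_sq_le r _ _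
      _ ≤ M * ∑ t, dist (x t) z ^ 2 := by rw [← mul_sum]; gcongr
  rw [sum_norm_sub_sq_eq_add _ hy, Fintype.card_fin] at hμ' ⊢
  rw [norm_sub_rev e]
  linarith

variable [MeasurableSpace X] [BorelSpace X] {Q : Measure X}

lemma memLp_two_dissEmbed [IsFiniteMeasure Q] {z : X}
    (hz : Integrable (fun x => dist x z ^ 2) Q) : MemLp (dissEmbed r) 2 Q := by
  have hdist : MemLp (fun x => dist x z) 2 Q :=
    (memLp_two_iff_integrable_sq (continuous_id.dist continuous_const).aestronglyMeasurable).2 hz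
  have hsub : MemLp (fun x => dissEmbed r x - dissEmbed r z) 2 Q :=
    (hdist.const_mul √M).mono ((continuous_dissEmbed r).sub continuous_const).aestronglyMeasurable
      (ae_of_all _ fun x => (norm_dissEmbed_sub_le r x z).trans (Real.le_norm_self _))
  simpa [Pi.add_def] using hsub.add (memLp_const (dissEmbed r z))

lemma norm_dissEmbed_sub_integral_sq_add_le [IsProbabilityMeasure Q] {z : X}
    (hz : Integrable (fun x => dist x z ^ 2) Q) :
    ‖dissEmbed r z - Q[dissEmbed r]‖ ^ 2 + ∫ x, ‖dissEmbed r x - Q[dissEmbed r]‖ ^ 2 ∂Q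
      ≤ M * ∫ x, dist x z ^ 2 ∂Q := by
  have hζ := memLp_two_dissEmbed r hz
  rw [norm_sub_rev, add_comm, ← integral_norm_sub_sq_eq_add hζ, ← integral_const_mul]
  exact integral_mono (hζ.sub (memLp_const _)).norm.integrable_sq (hz.const_mul _)
    fun x => norm_dissEmbed_sub_sq_le r x z

end DissimilarityEmbedding

section FrechetSampleMean

variable {X Ω : Type*} [MetricSpace X] [MeasurableSpace X] [BorelSpace X] [MeasurableSpace Ω]
  {P : Measure Ω} [IsProbabilityMeasure P] {Q : Measure X} [IsProbabilityMeasure Q] {M n : ℕ}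
  (r : Fin M → X) {g : Fin n → Ω → X} {μhat : Ω → X} {m : X}

lemma integrable_norm_dissEmbed_sub_inv_smul_sum_sq (hn : n ≠ 0) (hlaw : ∀ t, HasLaw (g t) Q P)
    (hm : Integrable (fun x => dist x m ^ 2) Q) (hμhat : Measurable μhat)
    (hsample : ∀ ω, ∑ t, dist (g t ω) (μhat ω) ^ 2 ≤ ∑ t, dist (g t ω) m ^ 2) :
    Integrable (fun ω => ‖dissEmbed r (μhat ω) - (n : ℝ)⁻¹ • ∑ t, dissEmbed r (g t ω)‖ ^ 2) P := by
  set ζ := dissEmbed r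
  set ybar : Ω → EuclideanSpace ℝ (Fin M) := fun ω => (n : ℝ)⁻¹ • ∑ t, ζ (g t ω)
  have hn' : (0 : ℝ) < n := Nat.cast_pos.2 (Nat.pos_of_ne_zero hn)
  have hybar : MemLp ybar 2 P := (memLp_finsetSum univ fun t _ =>
    (hlaw t).memLp_comp (memLp_two_dissEmbed r hm)).const_smul (n : ℝ)⁻¹
  have hbound : Integrable
      (fun ω => M * ∑ t, dist (g t ω) m ^ 2 + n * ‖ybar ω - ζ m‖ ^ 2) P :=
    ((integrable_finsetSum _ fun t _ => (hlaw t).integrable_comp hm).const_mul _).add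
      (((hybar.sub (memLp_const _)).norm.integrable_sq).const_mul _)
  have hmeas := ((continuous_dissEmbed r).measurable.comp hμhat).aestronglyMeasurable.sub hybar.1
  refine (hbound.const_mul (n : ℝ)⁻¹).mono' (hmeas.norm.pow 2) (ae_of_all _ fun ω => ?_)
  rw [Real.norm_of_nonneg (sq_nonneg _), inv_mul_eq_div, le_div_iff₀' hn']
  linarith [mul_norm_dissEmbed_sub_inv_smul_sum_sq_add_le r hn (fun t => g t ω) (hsample ω) (ζ m),
    sum_nonneg fun t (_ : t ∈ univ) => sq_nonneg ‖ζ (g t ω) - ζ m‖]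

lemma integral_norm_dissEmbed_sub_inv_smul_sum_sq_le (hn : n ≠ 0)
    (hlaw : ∀ t, HasLaw (g t) Q P) (hind : iIndepFun g P)
    (hm : Integrable (fun x => dist x m ^ 2) Q) (hμhat : Measurable μhat)
    (hsample : ∀ ω, ∑ t, dist (g t ω) (μhat ω) ^ 2 ≤ ∑ t, dist (g t ω) m ^ 2) :
    ∫ ω, ‖dissEmbed r (μhat ω) - (n : ℝ)⁻¹ • ∑ t, dissEmbed r (g t ω)‖ ^ 2 ∂P
      ≤ M * ∫ x, dist x m ^ 2 ∂Q
        - (1 - (n : ℝ)⁻¹) * ∫ x, ‖dissEmbed r x - Q[dissEmbed r]‖ ^ 2 ∂Q := by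
  set ζ := dissEmbed r
  set e := Q[ζ]
  set V := ∫ x, ‖ζ x - e‖ ^ 2 ∂Q
  set ybar : Ω → EuclideanSpace ℝ (Fin M) := fun ω => (n : ℝ)⁻¹ • ∑ t, ζ (g t ω)
  have hn' : (0 : ℝ) < n := Nat.cast_pos.2 (Nat.pos_of_ne_zero hn)
  have hζ : MemLp ζ 2 Q := memLp_two_dissEmbed r hm
  have hζe : Integrable (fun x => ‖ζ x - e‖ ^ 2) Q := (hζ.sub (memLp_const e)).norm.integrable_sq
  have hζge (t : Fin n) : Integrable (fun ω => ‖ζ (g t ω) - e‖ ^ 2) P :=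
    (hlaw t).integrable_comp hζe
  have hdg (t : Fin n) : Integrable (fun ω => dist (g t ω) m ^ 2) P := (hlaw t).integrable_comp hm
  have hybare : Integrable (fun ω => ‖ybar ω - e‖ ^ 2) P :=
    (((memLp_finsetSum univ fun t _ => (hlaw t).memLp_comp hζ).const_smul (n : ℝ)⁻¹).sub
      (memLp_const e)).norm.integrable_sq
  have hW := integrable_norm_dissEmbed_sub_inv_smul_sum_sq r hn hlaw hm hμhat hsample
  have hmono := integral_mono
    ((hW.const_mul (n : ℝ)).add (integrable_finsetSum _ fun t _ => hζge t))
    (((integrable_finsetSum _ fun t _ => hdg t).const_mul (M : ℝ)).add (hybare.const_mul (n : ℝ)))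
    fun ω => mul_norm_dissEmbed_sub_inv_smul_sum_sq_add_le r hn (fun t => g t ω) (hsample ω) e
  simp only [Pi.add_apply] at hmono
  rw [integral_add (hW.const_mul _) (integrable_finsetSum _ fun t _ => hζge t),
    integral_add ((integrable_finsetSum _ fun t _ => hdg t).const_mul _) (hybare.const_mul _),
    integral_const_mul, integral_const_mul, integral_const_mul,
    integral_finsetSum _ fun t _ => hζge t, integral_finsetSum _ fun t _ => hdg t] at hmono
  have hζgV (t : Fin n) : ∫ ω, ‖ζ (g t ω) - e‖ ^ 2 ∂P = V :=
    (hlaw t).integral_comp (f := fun x => ‖ζ x - e‖ ^ 2) hζe.1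
  have hdgV (t : Fin n) : ∫ ω, dist (g t ω) m ^ 2 ∂P = ∫ x, dist x m ^ 2 ∂Q :=
    (hlaw t).integral_comp (f := fun x => dist x m ^ 2) hm.1
  have hybarV : ∫ ω, ‖ybar ω - e‖ ^ 2 ∂P = V / n :=
    integral_norm_inv_smul_sum_sub_sq hn hlaw hind (continuous_dissEmbed r).measurable hζ
  simp only [hζgV, hdgV, hybarV, sum_const, card_univ, Fintype.card_fin, nsmul_eq_mul] at hmono
  rw [mul_div_cancel₀ _ hn'.ne'] at hmono
  rw [le_sub_iff_add_le, ← mul_le_mul_iff_of_pos_left hn', mul_add, ← mul_assoc, mul_sub, mul_one,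
    mul_inv_cancel₀ hn'.ne']
  linarith

end FrechetSampleMean

lemma abs_sub_le_of_triangle {α : Type*} {d : α → α → ℝ} (hsymm : ∀ a b, d a b = d b a)
    (htri : ∀ a b c, d a c ≤ d a b + d b c) (a b y z : α) :
    |d a b - d z y| ≤ d a y + d b z := by
  rw [abs_sub_le_iff]
  constructor
  · linarith [htri a y b, htri y z b, hsymm y z, hsymm z b]
  · linarith [htri z b y, htri b a y, hsymm z b, hsymm b a]

lemma abs_sub_le_of_norm_dominated {E : Type*} [SeminormedAddCommGroup E] {d : E → E → ℝ}
    (hsymm : ∀ a b, d a b = d b a) (htri : ∀ a b c, d a c ≤ d a b + d b c) {K : ℝ} (hK : 0 ≤ K)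
    (hdom : ∀ a b, d a b ≤ K * ‖a - b‖) {a b y z : E} {s : ℝ}
    (hs : ‖a - y‖ ^ 2 + ‖b - z‖ ^ 2 ≤ s) :
    |d a b - d z y| ≤ K * √(2 * s) :=
  calc |d a b - d z y| ≤ d a y + d b z := abs_sub_le_of_triangle hsymm htri a b y z
    _ ≤ K * (‖a - y‖ + ‖b - z‖) := by linarith [hdom a y, hdom b z]
    _ ≤ K * √(2 * s) := by
      gcongr
      exact Real.le_sqrt_of_sq_le (add_sq_le.trans (by linarith))

section BiLipschitz

variable {X Y : Type*} [PseudoMetricSpace X] {f : X → Y} {d : Y → Y → ℝ} {x y : X} {s b γ : ℝ}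

lemma dist_le_of_abs_sub_le_of_le_sub {C : ℝ} (hC : 0 < C)
    (hup : ∀ x y, dist x y ≤ C * d (f x) (f y)) (h : |d (f x) (f y) - s| ≤ b)
    (hs : s ≤ γ / C - b) : dist x y ≤ γ :=
  calc dist x y ≤ C * d (f x) (f y) := hup x y
    _ ≤ C * (γ / C) := by gcongr; linarith [(abs_le.1 h).2]
    _ = γ := mul_div_cancel₀ _ hC.ne'

lemma le_add_of_abs_sub_le_of_dist_le {c : ℝ} (hc : 0 < c)
    (hlow : ∀ x y, c * d (f x) (f y) ≤ dist x y) (h : |d (f x) (f y) - s| ≤ b)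
    (hγ : dist x y ≤ γ) : s ≤ γ / c + b := by
  have hd : d (f x) (f y) ≤ γ / c := by
    rw [le_div_iff₀' hc]
    exact (hlow x y).trans hγ
  linarith [(abs_le.1 h).1]

end BiLipschitz

section Probability

variable {Ω : Type*} [MeasurableSpace Ω] {P : Measure Ω}

lemma measureReal_le_add_of_imp [IsFiniteMeasure P] {p q : Ω → Prop} {B : Set Ω}
    (h : ∀ ω, p ω → ω ∉ B → q ω) : P.real {ω | p ω} ≤ P.real {ω | q ω} + P.real B := by
  have hsub : {ω | p ω} ⊆ {ω | q ω} ∪ B := fun ω hω => by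
    by_cases hB : ω ∈ B
    · exact Or.inr hB
    · exact Or.inl (h ω hω hB)
  exact (measureReal_mono hsub).trans (measureReal_union_le _ _)

lemma measureReal_add_le_le_div {W : Ω → ℝ} (hW0 : 0 ≤ W) (hW : Integrable W P) {v τ δ : ℝ}
    (hEW : ∫ ω, W ω ∂P ≤ v) (hτ : 0 ≤ τ) (hδ : 0 < δ) :
    P.real {ω | τ + δ ≤ W ω} ≤ v / δ := by
  have hmarkov := mul_meas_ge_le_integral_of_nonneg (ae_of_all _ hW0) hW (τ + δ)
  have hv : 0 ≤ v := (integral_nonneg hW0).trans hEW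
  calc P.real {ω | τ + δ ≤ W ω} ≤ v / (τ + δ) := by
        rw [le_div_iff₀' (by positivity)]
        linarith
    _ ≤ v / δ := div_le_div_of_nonneg_left hv hδ (by linarith)

end Probability

theorem frechet_mean_cdf_sandwich_general
    {X : Type*} [MetricSpace X] [MeasurableSpace X] [BorelSpace X]
    {Ω : Type*} [MeasurableSpace Ω] (P : Measure Ω) [IsProbabilityMeasure P]
    {M : ℕ} (r : Fin M → X)
    -- d' is a metric on ℝ^M dominated by a multiple of the Euclidean distance
    (d' : EuclideanSpace ℝ (Fin M) → EuclideanSpace ℝ (Fin M) → ℝ)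
    (hd'_symm : ∀ a b, d' a b = d' b a)
    (hd'_tri : ∀ a b c, d' a c ≤ d' a b + d' b c)
    (m' : ℝ) (hm' : 0 < m')
    (hd'_dom : ∀ a b, d' a b ≤ m' * ‖a - b‖)
    -- the embedding is bilipschitz w.r.t. d and d'
    (c C : ℝ) (hc : 0 < c) (hC : 0 < C)
    (hbilip_low : ∀ g f : X, c * d' (dissEmbed r g) (dissEmbed r f) ≤ dist g f)
    (hbilip_up : ∀ g f : X, dist g f ≤ C * d' (dissEmbed r g) (dissEmbed r f))
    -- i.i.d. sample g_1,…,g_n with common law Q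
    {n : ℕ} (hn : 2 ≤ n) (g : Fin n → Ω → X) (hgm : ∀ t, Measurable (g t))
    (Q : Measure X) [IsProbabilityMeasure Q]
    (hlaw : ∀ t, Measure.map (g t) P = Q)
    (hindep : iIndepFun g P)
    (hint : ∀ z : X, Integrable (fun x => dist x z ^ 2) Q)
    -- Fréchet population mean m with variation V_Q
    (m : X)
    (VQ : ℝ) (hVQ : VQ = ∫ x, dist x m ^ 2 ∂Q)
    -- measurable Fréchet sample mean
    (μhat : Ω → X) (hμhat : Measurable μhat)
    (hsample : ∀ ω, ∀ z : X,
      ∑ t, dist (g t ω) (μhat ω) ^ 2 ≤ ∑ t, dist (g t ω) z ^ 2)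
    -- embedded sample mean, expectation, variance and v₂
    (ybar : Ω → EuclideanSpace ℝ (Fin M))
    (hybar : ∀ ω, ybar ω = (n : ℝ)⁻¹ • ∑ t, dissEmbed r (g t ω))
    (e : EuclideanSpace ℝ (Fin M)) (he : e = ∫ x, dissEmbed r x ∂Q)
    (VarF : ℝ) (hVarF : VarF = ∫ x, ‖dissEmbed r x - e‖ ^ 2 ∂Q)
    (v2 : ℝ) (hv2 : v2 = (M : ℝ) * VQ - VarF / 2)
    -- the two CDFs
    (Ψ Υ : ℝ → ℝ)
    (hΨ : ∀ γ, Ψ γ = (P {ω | dist (μhat ω) m ≤ γ}).toReal)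
    (hΥ : ∀ γ, Υ γ = (P {ω | d' e (ybar ω) ≤ γ}).toReal) :
    ∀ δ > (0 : ℝ), ∀ γ ≥ (0 : ℝ),
      Υ (γ / C - m' * Real.sqrt (2 * (v2 + δ))) - v2 / δ ≤ Ψ γ ∧
      Ψ γ ≤ Υ (γ / c + m' * Real.sqrt (2 * (v2 + δ))) + v2 / δ := by
  intro δ hδ γ _
  obtain rfl : ybar = _ := funext hybar
  obtain rfl : Ψ = _ := funext hΨ
  obtain rfl : Υ = _ := funext hΥ
  beta_reduce
  set ζ := dissEmbed r
  set W : Ω → ℝ := fun ω => ‖ζ (μhat ω) - (n : ℝ)⁻¹ • ∑ t, ζ (g t ω)‖ ^ 2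
  have hlaw' (t : Fin n) : HasLaw (g t) Q P := ⟨(hgm t).aemeasurable, hlaw t⟩
  have hW := integrable_norm_dissEmbed_sub_inv_smul_sum_sq r (by omega) hlaw' (hint m) hμhat
    (fun ω => hsample ω m)
  have hEW := integral_norm_dissEmbed_sub_inv_smul_sum_sq_le r (by omega) hlaw' hindep (hint m)
    hμhat (fun ω => hsample ω m)
  have hbias := norm_dissEmbed_sub_integral_sq_add_le r (hint m)
  rw [← he, ← hVarF, ← hVQ] at hbias hEW
  have hVarF : 0 ≤ VarF := hVarF ▸ integral_nonneg fun x => sq_nonneg _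
  have hn2 : (n : ℝ)⁻¹ ≤ 2⁻¹ := inv_anti₀ two_pos (by exact_mod_cast hn)
  have hbad : P.real {ω | VarF / 2 + δ ≤ W ω} ≤ v2 / δ :=
    measureReal_add_le_le_div (fun ω => sq_nonneg _) hW (by nlinarith) (by positivity) hδ
  have hgood (ω : Ω) (hω : ω ∉ {ω | VarF / 2 + δ ≤ W ω}) :
      |d' (ζ (μhat ω)) (ζ m) - d' e ((n : ℝ)⁻¹ • ∑ t, ζ (g t ω))|
        ≤ m' * √(2 * (v2 + δ)) :=
    abs_sub_le_of_norm_dominated hd'_symm hd'_tri hm'.le hd'_dom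
      (by rw [Set.mem_ofPred_eq, not_le] at hω; linarith)
  constructor
  · refine sub_le_iff_le_add.2 <| (measureReal_le_add_of_imp fun ω hω hωB => ?_).trans
      (add_le_add le_rfl hbad)
    exact dist_le_of_abs_sub_le_of_le_sub hC hbilip_up (hgood ω hωB) hω
  · refine (measureReal_le_add_of_imp fun ω hω hωB => ?_).trans (add_le_add le_rfl hbad)
    exact le_add_of_abs_sub_le_of_dist_le hc hbilip_low (hgood ω hωB) hω

/-- the paper's Proposition 1: sandwich bound
`Υ(γ/C − b_δ) − v₂/δ ≤ Ψ(γ) ≤ Υ(γ/c + b_δ) + v₂/δ`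
relating the CDF `Ψ` of the distance between the sample and population Fréchet means in the
graph space to the CDF `Υ` of the distance between the sample mean and the expectation of the
embedded vectors. -/
theorem frechet_mean_cdf_sandwich
    {X : Type*} [MetricSpace X] [MeasurableSpace X] [BorelSpace X]
    {Ω : Type*} [MeasurableSpace Ω] (P : Measure Ω) [IsProbabilityMeasure P]
    {M : ℕ} (r : Fin M → X)
    -- d' is a metric on ℝ^M dominated by a multiple of the Euclidean distance
    (d' : EuclideanSpace ℝ (Fin M) → EuclideanSpace ℝ (Fin M) → ℝ)
    (hd'_self : ∀ a, d' a a = 0)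
    (hd'_eq : ∀ a b, d' a b = 0 → a = b)
    (hd'_symm : ∀ a b, d' a b = d' b a)
    (hd'_tri : ∀ a b c, d' a c ≤ d' a b + d' b c)
    (m' : ℝ) (hm' : 0 < m')
    (hd'_dom : ∀ a b, d' a b ≤ m' * ‖a - b‖)
    -- the embedding is bilipschitz w.r.t. d and d'
    (c C : ℝ) (hc : 0 < c) (hC : 0 < C)
    (hbilip_low : ∀ g f : X, c * d' (dissEmbed r g) (dissEmbed r f) ≤ dist g f)
    (hbilip_up : ∀ g f : X, dist g f ≤ C * d' (dissEmbed r g) (dissEmbed r f))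
    -- i.i.d. sample g_1,…,g_n with common law Q
    {n : ℕ} (hn : 2 ≤ n) (g : Fin n → Ω → X) (hgm : ∀ t, Measurable (g t))
    (Q : Measure X) [IsProbabilityMeasure Q]
    (hlaw : ∀ t, Measure.map (g t) P = Q)
    (hindep : iIndepFun g P)
    (hint : ∀ z : X, Integrable (fun x => dist x z ^ 2) Q)
    -- Fréchet population mean m with variation V_Q
    (m : X) (hmean : ∀ z : X, ∫ x, dist x m ^ 2 ∂Q ≤ ∫ x, dist x z ^ 2 ∂Q)
    (VQ : ℝ) (hVQ : VQ = ∫ x, dist x m ^ 2 ∂Q)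
    -- measurable Fréchet sample mean
    (μhat : Ω → X) (hμhat : Measurable μhat)
    (hsample : ∀ ω, ∀ z : X,
      ∑ t, dist (g t ω) (μhat ω) ^ 2 ≤ ∑ t, dist (g t ω) z ^ 2)
    -- embedded sample mean, expectation, variance and v₂
    (ybar : Ω → EuclideanSpace ℝ (Fin M))
    (hybar : ∀ ω, ybar ω = (n : ℝ)⁻¹ • ∑ t, dissEmbed r (g t ω))
    (e : EuclideanSpace ℝ (Fin M)) (he : e = ∫ x, dissEmbed r x ∂Q)
    (VarF : ℝ) (hVarF : VarF = ∫ x, ‖dissEmbed r x - e‖ ^ 2 ∂Q)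
    (v2 : ℝ) (hv2 : v2 = (M : ℝ) * VQ - VarF / 2)
    -- the two CDFs
    (Ψ Υ : ℝ → ℝ)
    (hΨ : ∀ γ, Ψ γ = (P {ω | dist (μhat ω) m ≤ γ}).toReal)
    (hΥ : ∀ γ, Υ γ = (P {ω | d' e (ybar ω) ≤ γ}).toReal) :
    ∀ δ > (0 : ℝ), ∀ γ ≥ (0 : ℝ),
      Υ (γ / C - m' * Real.sqrt (2 * (v2 + δ))) - v2 / δ ≤ Ψ γ ∧
      Ψ γ ≤ Υ (γ / c + m' * Real.sqrt (2 * (v2 + δ))) + v2 / δ :=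
  frechet_mean_cdf_sandwich_general P r d' hd'_symm hd'_tri m' hm' hd'_dom c C hc hC hbilip_low
    hbilip_up hn g hgm Q hlaw hindep hint m VQ hVQ μhat hμhat hsample ybar hybar e he VarF hVarF v2
    hv2 Ψ Υ hΨ hΥ
end

section
/- Let (X,d) be a metric space equipped with its Borel σ-algebra, and let r_1,…,r_M ∈ X be prototypes with dissimilarity embedding ζ(g) = (d(g,r_1),…,d(g,r_M)) ∈ ℝ^M. Let g be an X-valued random element such that E[d(g,z)²] < ∞ for every z ∈ X. Then for every g₀ ∈ X: ‖E[ζ(g)] − ζ(g₀)‖₂² + E[‖ζ(g) − E[ζ(g)]‖₂²] ≤ M·E[d(g,g₀)²]. In particular, if m ∈ X is a Fréchet population mean of the law of g with Fréchet variation V_Q = E[d(g,m)²], then ‖E[ζ(g)] − ζ(m)‖₂² ≤ M·V_Q − E[‖ζ(g) − E[ζ(g)]‖₂²]. -/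
open MeasureTheory

/-- Bias–variance decomposition for real random variables. -/
lemma real_bias_variance {Ω : Type*} [MeasurableSpace Ω] (P : Measure Ω)
    [IsProbabilityMeasure P] (X : Ω → ℝ) (hX : Integrable X P)
    (hX2 : Integrable (fun ω => X ω ^ 2) P) (c : ℝ) :
    ∫ ω, (X ω - c) ^ 2 ∂P
      = ((∫ ω, X ω ∂P) - c) ^ 2 + ∫ ω, (X ω - ∫ ω', X ω' ∂P) ^ 2 ∂P := by
  set μ := ∫ ω, X ω ∂P with hμ
  have hsq : ∀ a : ℝ, Integrable (fun ω => (X ω - a) ^ 2) P := by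
    intro a
    have h : (fun ω => (X ω - a) ^ 2)
        = fun ω => X ω ^ 2 - (2 * a) * X ω + a ^ 2 := by funext ω; ring
    rw [h]
    exact (hX2.sub (hX.const_mul _)).add (integrable_const _)
  have hXm : Integrable (fun ω => X ω - μ) P := hX.sub (integrable_const μ)
  have hzero : ∫ ω, (X ω - μ) ∂P = 0 := by
    rw [integral_sub hX (integrable_const μ), integral_const]
    simp [hμ]
  have hexp : (fun ω => (X ω - c) ^ 2)
      = fun ω => (X ω - μ) ^ 2 + (2 * (μ - c)) * (X ω - μ) + (μ - c) ^ 2 := by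
    funext ω; ring
  have h1 : Integrable (fun ω => (X ω - μ) ^ 2 + 2 * (μ - c) * (X ω - μ)) P :=
    (hsq μ).add (hXm.const_mul _)
  have h2 : Integrable (fun ω => 2 * (μ - c) * (X ω - μ)) P := hXm.const_mul _
  rw [hexp, integral_add h1 (integrable_const _),
    integral_add (hsq μ) h2, integral_const_mul, hzero, integral_const]
  simp
  ring

/-- population part of the paper's Lemma 1:
for every `g₀`, `‖E[ζ(g)] − ζ(g₀)‖₂² + E[‖ζ(g) − E[ζ(g)]‖₂²] ≤ M·E[d(g,g₀)²]`;
in particular, for a Fréchet population mean `m`,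
`‖E[ζ(g)] − ζ(m)‖₂² ≤ M·V_Q − E[‖ζ(g) − E[ζ(g)]‖₂²]`. -/
theorem embedding_population_mean_bound
    {X : Type*} [MetricSpace X] [MeasurableSpace X] [BorelSpace X]
    {Ω : Type*} [MeasurableSpace Ω] (P : Measure Ω) [IsProbabilityMeasure P]
    {M : ℕ} (r : Fin M → X)
    (g : Ω → X) (hg : Measurable g)
    (hint : ∀ z : X, Integrable (fun ω => dist (g ω) z ^ 2) P)
    (e : EuclideanSpace ℝ (Fin M)) (he : e = ∫ ω, dissEmbed r (g ω) ∂P)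
    (m : X)
    (hm : ∀ z : X, ∫ ω, dist (g ω) m ^ 2 ∂P ≤ ∫ ω, dist (g ω) z ^ 2 ∂P) :
    (∀ g₀ : X,
      ‖e - dissEmbed r g₀‖ ^ 2 + ∫ ω, ‖dissEmbed r (g ω) - e‖ ^ 2 ∂P
        ≤ (M : ℝ) * ∫ ω, dist (g ω) g₀ ^ 2 ∂P) ∧
    ‖e - dissEmbed r m‖ ^ 2
      ≤ (M : ℝ) * (∫ ω, dist (g ω) m ^ 2 ∂P) - ∫ ω, ‖dissEmbed r (g ω) - e‖ ^ 2 ∂P := by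
  -- integrability of the distances
  have hL1 : ∀ z : X, Integrable (fun ω => dist (g ω) z) P := by
    intro z
    have hbInt : Integrable (fun ω => dist (g ω) z ^ 2 + 1) P := (hint z).add (integrable_const 1)
    have hmeas : Measurable (fun ω => dist (g ω) z) :=
      (continuous_id.dist continuous_const).measurable.comp hg
    refine hbInt.mono' hmeas.aestronglyMeasurable ?_
    filter_upwards with ω
    have h0 : (0:ℝ) ≤ dist (g ω) z := dist_nonneg
    rw [Real.norm_eq_abs, abs_of_nonneg h0]
    nlinarith [sq_nonneg (dist (g ω) z - 1)]
  have hsqInt : ∀ (z : X) (c : ℝ), Integrable (fun ω => (dist (g ω) z - c) ^ 2) P := by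
    intro z c
    have h : (fun ω => (dist (g ω) z - c) ^ 2)
        = fun ω => dist (g ω) z ^ 2 - (2 * c) * dist (g ω) z + c ^ 2 := by funext ω; ring
    rw [h]
    exact ((hint z).sub ((hL1 z).const_mul _)).add (integrable_const _)
  -- coordinates of the embedding
  have hcoord : ∀ (x : X) (i : Fin M), dissEmbed r x i = dist x (r i) := fun _ _ => rfl
  -- norm expansion
  have hnorm : ∀ (v c : EuclideanSpace ℝ (Fin M)),
      ‖v - c‖ ^ 2 = ∑ i, (v i - c i) ^ 2 := by
    intro v c
    rw [EuclideanSpace.norm_eq, Real.sq_sqrt (by positivity)]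
    simp [Real.norm_eq_abs, sq_abs]
  have hnormf : ∀ (ω : Ω) (c : EuclideanSpace ℝ (Fin M)),
      ‖dissEmbed r (g ω) - c‖ ^ 2 = ∑ i, (dist (g ω) (r i) - c i) ^ 2 := by
    intro ω c
    rw [hnorm]
    rfl
  -- measurability / integrability of the embedded process
  have hcont : Continuous (dissEmbed r) := by
    refine (PiLp.continuous_toLp 2 (fun _ : Fin M => ℝ)).comp ?_
    exact continuous_pi fun i => continuous_id.dist continuous_const
  have hf : Integrable (fun ω => dissEmbed r (g ω)) P := by
    refine Integrable.mono' (integrable_finset_sum Finset.univ fun i _ => hL1 (r i))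
      (hcont.measurable.comp hg).aestronglyMeasurable ?_
    filter_upwards with ω
    rw [EuclideanSpace.norm_eq]
    have hle : ∑ i, ‖dissEmbed r (g ω) i‖ ^ 2 ≤ (∑ i, dist (g ω) (r i)) ^ 2 := by
      have := Finset.sum_sq_le_sq_sum_of_nonneg
        (s := Finset.univ) (f := fun i => dist (g ω) (r i))
        (fun i _ => dist_nonneg)
      simpa [hcoord, Real.norm_eq_abs, sq_abs, abs_of_nonneg (dist_nonneg (x := g ω))] using this
    calc Real.sqrt (∑ i, ‖dissEmbed r (g ω) i‖ ^ 2)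
        ≤ Real.sqrt ((∑ i, dist (g ω) (r i)) ^ 2) := Real.sqrt_le_sqrt hle
      _ = ∑ i, dist (g ω) (r i) := Real.sqrt_sq (Finset.sum_nonneg fun i _ => dist_nonneg)
  -- coordinates of e
  have hei : ∀ i : Fin M, e i = ∫ ω, dist (g ω) (r i) ∂P := by
    intro i
    have h := (EuclideanSpace.proj (𝕜 := ℝ) i).integral_comp_comm hf
    rw [he]
    calc (∫ ω, dissEmbed r (g ω) ∂P) i
        = EuclideanSpace.proj (𝕜 := ℝ) i (∫ ω, dissEmbed r (g ω) ∂P) := rfl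
      _ = ∫ ω, EuclideanSpace.proj (𝕜 := ℝ) i (dissEmbed r (g ω)) ∂P := h.symm
      _ = ∫ ω, dist (g ω) (r i) ∂P := rfl
  -- expansion of the integral of the squared norm
  have expand : ∀ c : EuclideanSpace ℝ (Fin M),
      ∫ ω, ‖dissEmbed r (g ω) - c‖ ^ 2 ∂P
        = ∑ i, ∫ ω, (dist (g ω) (r i) - c i) ^ 2 ∂P := by
    intro c
    rw [← integral_finset_sum _ fun i _ => hsqInt (r i) (c i)]
    simp only [hnormf]
  -- key bias–variance identity
  have key : ∀ c : EuclideanSpace ℝ (Fin M),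
      ∫ ω, ‖dissEmbed r (g ω) - c‖ ^ 2 ∂P
        = ‖e - c‖ ^ 2 + ∫ ω, ‖dissEmbed r (g ω) - e‖ ^ 2 ∂P := by
    intro c
    rw [expand c, expand e, hnorm e c, ← Finset.sum_add_distrib]
    refine Finset.sum_congr rfl fun i _ => ?_
    rw [hei i]
    exact real_bias_variance P _ (hL1 (r i)) (hint (r i)) (c i)
  -- pointwise bound and main inequality
  have main : ∀ g₀ : X,
      ‖e - dissEmbed r g₀‖ ^ 2 + ∫ ω, ‖dissEmbed r (g ω) - e‖ ^ 2 ∂P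
        ≤ (M : ℝ) * ∫ ω, dist (g ω) g₀ ^ 2 ∂P := by
    intro g₀
    have hb : ∫ ω, ‖dissEmbed r (g ω) - dissEmbed r g₀‖ ^ 2 ∂P
        ≤ (M : ℝ) * ∫ ω, dist (g ω) g₀ ^ 2 ∂P := by
      rw [← integral_const_mul]
      refine integral_mono ?_ ((hint g₀).const_mul _) ?_
      · have : Integrable (fun ω => ∑ i, (dist (g ω) (r i) - dissEmbed r g₀ i) ^ 2) P :=
          integrable_finset_sum _ fun i _ => hsqInt (r i) _
        exact this.congr (by filter_upwards with ω; rw [hnormf])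
      · intro ω
        dsimp only
        rw [hnormf]
        calc ∑ i, (dist (g ω) (r i) - dissEmbed r g₀ i) ^ 2
            ≤ ∑ _i : Fin M, dist (g ω) g₀ ^ 2 := by
              refine Finset.sum_le_sum fun i _ => ?_
              rw [hcoord, ← sq_abs]
              exact pow_le_pow_left₀ (abs_nonneg _) (abs_dist_sub_le _ _ _) 2
          _ = (M : ℝ) * dist (g ω) g₀ ^ 2 := by
              rw [Finset.sum_const, Finset.card_univ, Fintype.card_fin, nsmul_eq_mul]
    calc ‖e - dissEmbed r g₀‖ ^ 2 + ∫ ω, ‖dissEmbed r (g ω) - e‖ ^ 2 ∂P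
        = ∫ ω, ‖dissEmbed r (g ω) - dissEmbed r g₀‖ ^ 2 ∂P := (key _).symm
      _ ≤ (M : ℝ) * ∫ ω, dist (g ω) g₀ ^ 2 ∂P := hb
  refine ⟨main, ?_⟩
  have := main m
  linarith
end

section
/- Let x be a random element of a measurable space 𝒳 defined on a probability space (Ω,P), and let d_1, d_2 : 𝒳 → [0,∞) be measurable. Let u : [0,∞) → [0,∞) be strictly increasing and bijective, and let p ∈ [0,1]. If P(d_1(x) ≤ u(d_2(x))) ≥ p, then for every γ ≥ 0: P(d_1(x) ≤ u(γ)) ≥ P(d_2(x) ≤ γ) − (1 − p); equivalently, writing Φ_1 and Φ_2 for the cumulative distribution functions of d_1(x) and d_2(x), Φ_1(s) ≥ Φ_2(u⁻¹(s)) − (1 − p) for all s in the range of u. -/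
open MeasureTheory NNReal

/-- the paper's Lemma 2: if `P(d₁(x) ≤ u(d₂(x))) ≥ p` for a strictly increasing
bijection `u : [0,∞) → [0,∞)`, then `P(d₁(x) ≤ u(γ)) ≥ P(d₂(x) ≤ γ) − (1 − p)` for all `γ ≥ 0`. -/
theorem cdf_transfer_of_pointwise_domination
    {Ω : Type*} [MeasurableSpace Ω] (P : Measure Ω) [IsProbabilityMeasure P]
    {𝒳 : Type*} [MeasurableSpace 𝒳]
    (x : Ω → 𝒳) (hx : Measurable x)
    (d₁ d₂ : 𝒳 → ℝ≥0) (hd₁ : Measurable d₁) (hd₂ : Measurable d₂)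
    (u : ℝ≥0 → ℝ≥0) (hu_mono : StrictMono u) (hu_bij : Function.Bijective u)
    (p : ℝ) (hp0 : 0 ≤ p) (hp1 : p ≤ 1)
    (hdom : p ≤ (P {ω | d₁ (x ω) ≤ u (d₂ (x ω))}).toReal) :
    ∀ γ : ℝ≥0,
      (P {ω | d₂ (x ω) ≤ γ}).toReal - (1 - p) ≤ (P {ω | d₁ (x ω) ≤ u γ}).toReal := by
  intro γ
  have hu_meas : Measurable u := hu_mono.monotone.measurable
  set D : Set Ω := {ω | d₁ (x ω) ≤ u (d₂ (x ω))} with hD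
  set A : Set Ω := {ω | d₁ (x ω) ≤ u γ} with hA
  set B : Set Ω := {ω | d₂ (x ω) ≤ γ} with hB
  have hDmeas : MeasurableSet D :=
    measurableSet_le (hd₁.comp hx) (hu_meas.comp (hd₂.comp hx))
  have hsub : B ⊆ A ∪ Dᶜ := by
    intro ω hω
    by_cases h : ω ∈ D
    · left
      exact le_trans h (hu_mono.monotone hω)
    · right; exact h
  have h1 : P B ≤ P A + P Dᶜ := le_trans (measure_mono hsub) (measure_union_le _ _)
  have hcompl : (P Dᶜ).toReal = 1 - (P D).toReal := by
    rw [measure_compl hDmeas (measure_ne_top _ _)]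
    simp [ENNReal.toReal_sub_of_le prob_le_one (by simp)]
  have hfin : ∀ s : Set Ω, P s ≠ ⊤ := fun s => measure_ne_top _ _
  have h2 : (P B).toReal ≤ (P A).toReal + (P Dᶜ).toReal := by
    rw [← ENNReal.toReal_add (hfin A) (hfin Dᶜ)]
    exact ENNReal.toReal_mono (by simp [ENNReal.add_ne_top, hfin]) h1
  rw [hcompl] at h2
  linarith
end
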